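/- arXiv:2201.05447 — 2 statements merged into one kernel-verified Lean document; each statement's English description precedes it below -/
import Mathlib

section
/- For all natural numbers i, j, k, m such that one of ω_i, ω_j, ω_k, ω_m equals the sum of the other three (for instance ω_m = ω_i + ω_j + ω_k, i.e. m = i + j + k + 2), the Fourier coefficient vanishes: C_{ijkm} = 0. -/
open MeasureTheory

/-- Chebyshev polynomials of the second kind, as real-valued functions. -/
noncomputable def chebU : ℕ → ℝ → ℝ
  | 0, _ => 1
  | 1, y => 2 * y
  | n + 2, y => 2 * y * chebU (n + 1) y - chebU n y

/-- Fourier coefficients of the cubic conformal wave equation on the Einstein cylinder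
in spherical symmetry. -/
noncomputable def Ccoef (i j k m : ℕ) : ℝ :=
  (2 / Real.pi) *
    ∫ y in (-1:ℝ)..1, chebU i y * chebU j y * chebU k y * chebU m y * Real.sqrt (1 - y ^ 2)

lemma chebU_continuous (n : ℕ) : Continuous (chebU n) := by
  induction n using Nat.twoStepInduction with
  | zero => simpa [chebU] using continuous_const
  | one =>
    show Continuous fun y : ℝ => 2 * y
    fun_prop
  | more n ih1 ih2 =>
    show Continuous fun y : ℝ => 2 * y * chebU (n + 1) y - chebU n y
    fun_prop

lemma chebU_cos (n : ℕ) (θ : ℝ) :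
    chebU n (Real.cos θ) * Real.sin θ = Real.sin (((n : ℝ) + 1) * θ) := by
  induction n using Nat.twoStepInduction with
  | zero => simp [chebU]
  | one =>
    show 2 * Real.cos θ * Real.sin θ = _
    rw [show ((1:ℕ):ℝ) + 1 = 2 by norm_num, Real.sin_two_mul]
    ring
  | more n ih1 ih2 =>
    show (2 * Real.cos θ * chebU (n + 1) (Real.cos θ) - chebU n (Real.cos θ)) * Real.sin θ = _
    push_cast at ih1 ih2 ⊢
    have h1 : ((n : ℝ) + 2 + 1) * θ = ((n : ℝ) + 1 + 1) * θ + θ := by ring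
    have h2 : ((n : ℝ) + 1) * θ = ((n : ℝ) + 1 + 1) * θ - θ := by ring
    rw [h1, Real.sin_add]
    rw [h2, Real.sin_sub] at ih1
    linear_combination 2 * Real.cos θ * ih2 - ih1

lemma chebU_rec (n : ℕ) (y : ℝ) :
    2 * y * chebU (n + 1) y = chebU (n + 2) y + chebU n y := by
  show _ = (2 * y * chebU (n + 1) y - chebU n y) + chebU n y
  ring

lemma chebU_mul (j : ℕ) : ∀ (d : ℕ) (y : ℝ),
    chebU (j + d) y * chebU j y = ∑ t ∈ Finset.range (j + 1), chebU (d + 2 * t) y := by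
  induction j using Nat.twoStepInduction with
  | zero => intro d y; simp [chebU]
  | one =>
    intro d y
    have : chebU (1 + d) y * chebU 1 y = 2 * y * chebU (d + 1) y := by
      show chebU (1 + d) y * (2 * y) = _
      rw [show 1 + d = d + 1 by ring]; ring
    rw [this, chebU_rec, Finset.sum_range_succ, Finset.sum_range_one]
    all_goals norm_num [add_comm]

  | more j ih1 ih2 =>
    intro d y
    have hrec : chebU (j + 2 + d) y * chebU (j + 2) y
        = 2 * y * (chebU ((j + 1) + (d + 1)) y * chebU (j + 1) y)
          - chebU (j + (d + 2)) y * chebU j y := by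
      show chebU (j + 2 + d) y * (2 * y * chebU (j + 1) y - chebU j y) = _
      rw [show (j + 1) + (d + 1) = j + 2 + d by ring, show j + (d + 2) = j + 2 + d by ring]
      ring
    rw [hrec, ih2, ih1, Finset.mul_sum]
    have hterm : ∀ t ∈ Finset.range (j + 2),
        2 * y * chebU (d + 1 + 2 * t) y = chebU (d + 2 * t + 2) y + chebU (d + 2 * t) y := by
      intro t _
      rw [show d + 1 + 2 * t = (d + 2 * t) + 1 by ring]
      exact chebU_rec (d + 2 * t) y
    rw [Finset.sum_congr rfl hterm, Finset.sum_add_distrib]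
    have e1 : ∑ t ∈ Finset.range (j + 1), chebU (d + 2 + 2 * t) y
        = ∑ t ∈ Finset.range (j + 1), chebU (d + 2 * t + 2) y := by
      apply Finset.sum_congr rfl; intro t _; congr 1; ring
    rw [e1, Finset.sum_range_succ (fun t => chebU (d + 2 * t + 2) y) (j + 1)]
    rw [Finset.sum_range_succ (fun t => chebU (d + 2 * t) y) (j + 2)]
    rw [show d + 2 * (j + 1) + 2 = d + 2 * (j + 2) by ring]
    ring

lemma integral_cos_mul_const (c : ℝ) (hc : c ≠ 0) :
    ∫ θ in (0:ℝ)..Real.pi, Real.cos (c * θ) = Real.sin (c * Real.pi) / c := by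
  have := intervalIntegral.mul_integral_comp_mul_left (a := (0:ℝ)) (b := Real.pi)
    (f := fun x => Real.cos x) (c := c)
  rw [mul_zero] at this
  have h2 : ∫ x in (0:ℝ)..(c * Real.pi), Real.cos x = Real.sin (c * Real.pi) := by
    simp [integral_cos]
  rw [eq_div_iff hc, mul_comm]
  exact this.trans h2

lemma integral_sin_mul_sin (p q : ℕ) (hpq : p ≠ q) :
    ∫ θ in (0:ℝ)..Real.pi, Real.sin ((p : ℝ) * θ) * Real.sin ((q : ℝ) * θ) = 0 := by
  have hd : (p : ℝ) - q ≠ 0 := by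
    intro h; apply hpq; exact_mod_cast sub_eq_zero.mp h
  have hs : (p : ℝ) + q ≠ 0 := by
    intro h
    have hp : (p : ℝ) = 0 ∧ (q : ℝ) = 0 := by
      constructor <;> nlinarith [Nat.cast_nonneg (α := ℝ) p, Nat.cast_nonneg (α := ℝ) q]
    apply hpq
    have : p = 0 := by exact_mod_cast hp.1
    have : q = 0 := by exact_mod_cast hp.2
    omega
  have hint : ∀ θ : ℝ, Real.sin ((p : ℝ) * θ) * Real.sin ((q : ℝ) * θ)
      = (Real.cos (((p : ℝ) - q) * θ) - Real.cos (((p : ℝ) + q) * θ)) / 2 := by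
    intro θ
    rw [sub_mul, add_mul, Real.cos_sub, Real.cos_add]
    ring
  simp only [hint]
  have i1 : IntervalIntegrable (fun θ : ℝ => Real.cos (((p:ℝ) - q) * θ)) volume 0 Real.pi := by
    apply Continuous.intervalIntegrable; fun_prop
  have i2 : IntervalIntegrable (fun θ : ℝ => Real.cos (((p:ℝ) + q) * θ)) volume 0 Real.pi := by
    apply Continuous.intervalIntegrable; fun_prop
  rw [intervalIntegral.integral_div, intervalIntegral.integral_sub i1 i2]
  rw [integral_cos_mul_const _ hd, integral_cos_mul_const _ hs]
  have z1 : Real.sin (((p : ℝ) - q) * Real.pi) = 0 := by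
    have : ((p : ℝ) - q) = ((p : ℤ) - q : ℤ) := by push_cast; ring
    rw [this]; exact Real.sin_int_mul_pi _
  have z2 : Real.sin (((p : ℝ) + q) * Real.pi) = 0 := by
    have : ((p : ℝ) + q) = ((p : ℤ) + q : ℤ) := by push_cast; ring
    rw [this]; exact Real.sin_int_mul_pi _
  rw [z1, z2]
  norm_num

lemma chebU_orthogonal (a b : ℕ) (hab : a ≠ b) :
    ∫ y in (-1:ℝ)..1, chebU a y * chebU b y * Real.sqrt (1 - y ^ 2) = 0 := by
  set f : ℝ → ℝ := fun y => chebU a y * chebU b y * Real.sqrt (1 - y ^ 2) with hf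
  have hfc : Continuous f := by
    apply Continuous.mul
    · exact (chebU_continuous a).mul (chebU_continuous b)
    · exact Real.continuous_sqrt.comp (by fun_prop)
  have hsub : (∫ θ in (0:ℝ)..Real.pi, (-Real.sin θ) • (f ∘ Real.cos) θ)
      = ∫ y in (Real.cos 0)..(Real.cos Real.pi), f y := by
    apply intervalIntegral.integral_comp_smul_deriv
    · intro x _
      simpa using (Real.hasDerivAt_cos x)
    · exact (Real.continuous_sin.neg).continuousOn
    · exact hfc
  rw [Real.cos_zero, Real.cos_pi] at hsub
  have h2 : (∫ θ in (0:ℝ)..Real.pi, (-Real.sin θ) • (f ∘ Real.cos) θ)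
      = - ∫ θ in (0:ℝ)..Real.pi, Real.sin θ * (f (Real.cos θ)) := by
    rw [← intervalIntegral.integral_neg]
    congr 1 with θ
    simp [Function.comp]
  have h3 : (∫ y in (1:ℝ)..(-1), f y) = - ∫ y in (-1:ℝ)..1, f y :=
    intervalIntegral.integral_symm _ _
  have key : (∫ θ in (0:ℝ)..Real.pi, Real.sin θ * (f (Real.cos θ)))
      = ∫ θ in (0:ℝ)..Real.pi, Real.sin (((a:ℝ)+1) * θ) * Real.sin (((b:ℝ)+1) * θ) := by
    apply intervalIntegral.integral_congr
    intro θ hθ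
    rw [Set.uIcc_of_le Real.pi_pos.le] at hθ
    have hsθ : Real.sin θ ≥ 0 := Real.sin_nonneg_of_mem_Icc hθ
    have hsqrt : Real.sqrt (1 - Real.cos θ ^ 2) = Real.sin θ := by
      rw [show 1 - Real.cos θ ^ 2 = Real.sin θ ^ 2 by
        have := Real.sin_sq_add_cos_sq θ; linarith]
      exact Real.sqrt_sq hsθ
    show Real.sin θ * f (Real.cos θ) = _
    rw [hf]
    simp only []
    rw [hsqrt, ← chebU_cos a θ, ← chebU_cos b θ]
    ring
  have horth : ∫ θ in (0:ℝ)..Real.pi, Real.sin (((a:ℝ)+1) * θ) * Real.sin (((b:ℝ)+1) * θ) = 0 := by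
    have := integral_sin_mul_sin (a+1) (b+1) (by omega)
    push_cast at this
    convert this using 2
  have : - ∫ y in (-1:ℝ)..1, f y = -0 := by
    rw [← h3, ← hsub, h2, key, horth, neg_zero]
  simpa using this

lemma chebU_mul_bounded (i j : ℕ) : ∃ (n : ℕ) (g : ℕ → ℕ),
    (∀ t ∈ Finset.range n, g t ≤ i + j) ∧
    ∀ y : ℝ, chebU i y * chebU j y = ∑ t ∈ Finset.range n, chebU (g t) y := by
  rcases le_total j i with h | h
  · refine ⟨j + 1, fun t => (i - j) + 2 * t, ?_, ?_⟩
    · intro t ht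
      simp only [Finset.mem_range] at ht
      show i - j + 2 * t ≤ i + j
      omega
    · intro y
      have := chebU_mul j (i - j) y
      rw [show j + (i - j) = i by omega] at this
      exact this
  · refine ⟨i + 1, fun t => (j - i) + 2 * t, ?_, ?_⟩
    · intro t ht
      simp only [Finset.mem_range] at ht
      show j - i + 2 * t ≤ i + j
      omega
    · intro y
      have := chebU_mul i (j - i) y
      rw [show i + (j - i) = j by omega] at this
      rw [mul_comm]
      exact this

lemma Ccoef_key (i j k : ℕ) : Ccoef i j k (i + j + k + 2) = 0 := by
  obtain ⟨n, g, hg, hgy⟩ := chebU_mul_bounded i j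
  have hkm : ∀ y : ℝ, chebU k y * chebU (i + j + k + 2) y
      = ∑ s ∈ Finset.range (k + 1), chebU ((i + j + 2) + 2 * s) y := by
    intro y
    have := chebU_mul k (i + j + 2) y
    rw [show k + (i + j + 2) = i + j + k + 2 by ring] at this
    rw [mul_comm]
    exact this
  unfold Ccoef
  rw [mul_eq_zero]
  right
  have hexp : ∀ y : ℝ, chebU i y * chebU j y * chebU k y * chebU (i+j+k+2) y * Real.sqrt (1 - y ^ 2)
      = ∑ t ∈ Finset.range n, ∑ s ∈ Finset.range (k + 1),
          chebU (g t) y * chebU ((i + j + 2) + 2 * s) y * Real.sqrt (1 - y ^ 2) := by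
    intro y
    have e : chebU i y * chebU j y * chebU k y * chebU (i+j+k+2) y * Real.sqrt (1 - y ^ 2)
        = (chebU i y * chebU j y) * (chebU k y * chebU (i+j+k+2) y) * Real.sqrt (1 - y ^ 2) := by
      ring
    rw [e, hgy y, hkm y, Finset.sum_mul_sum, Finset.sum_mul]
    apply Finset.sum_congr rfl
    intro t _
    rw [Finset.sum_mul]
  rw [intervalIntegral.integral_congr (fun y _ => hexp y)]
  rw [intervalIntegral.integral_finset_sum]
  · apply Finset.sum_eq_zero
    intro t ht
    rw [intervalIntegral.integral_finset_sum]
    · apply Finset.sum_eq_zero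
      intro s _
      apply chebU_orthogonal
      have := hg t ht
      omega
    · intro s _
      apply Continuous.intervalIntegrable
      exact ((chebU_continuous _).mul (chebU_continuous _)).mul
        (Real.continuous_sqrt.comp (by fun_prop))
  · intro t _
    apply Continuous.intervalIntegrable
    apply continuous_finset_sum
    intro s _
    exact ((chebU_continuous _).mul (chebU_continuous _)).mul
      (Real.continuous_sqrt.comp (by fun_prop))

lemma Ccoef_perm_k (i j k m : ℕ) : Ccoef i j k m = Ccoef i j m k := by
  unfold Ccoef
  congr 1
  apply intervalIntegral.integral_congr
  intro y _
  ring

lemma Ccoef_perm_j (i j k m : ℕ) : Ccoef i j k m = Ccoef i k m j := by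
  unfold Ccoef
  congr 1
  apply intervalIntegral.integral_congr
  intro y _
  ring

lemma Ccoef_perm_i (i j k m : ℕ) : Ccoef i j k m = Ccoef j k m i := by
  unfold Ccoef
  congr 1
  apply intervalIntegral.integral_congr
  intro y _
  ring

/-- Vanishing of the Fourier coefficients on resonant indices where one frequency
`ω_n = n + 1` equals the sum of the other three. -/
theorem Ccoef_eq_zero_of_one_plus_three_resonance (i j k m : ℕ)
    (h : m + 1 = (i + 1) + (j + 1) + (k + 1) ∨
         k + 1 = (i + 1) + (j + 1) + (m + 1) ∨
         j + 1 = (i + 1) + (k + 1) + (m + 1) ∨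
         i + 1 = (j + 1) + (k + 1) + (m + 1)) :
    Ccoef i j k m = 0 := by
  rcases h with h | h | h | h
  · rw [show m = i + j + k + 2 by omega]
    exact Ccoef_key i j k
  · rw [Ccoef_perm_k, show k = i + j + m + 2 by omega]
    exact Ccoef_key i j m
  · rw [Ccoef_perm_j, show j = i + k + m + 2 by omega]
    exact Ccoef_key i k m
  · rw [Ccoef_perm_i, show i = j + k + m + 2 by omega]
    exact Ccoef_key j k m
end

section
/- For all natural numbers i, j, k, m, the Fourier coefficient C_{ijkm} equals the number of pairs of natural numbers (s, t) with s ≤ min(i, j), t ≤ min(k, m) and |i − j| + 2s = |k − m| + 2t; that is, C_{ijkm} = Card{(s, t) ∈ ℕ × ℕ : s ≤ min(i, j), t ≤ min(k, m), |i − j| + 2s = |k − m| + 2t} (the cardinality cast to a real number). -/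
open MeasureTheory

/-!
The linearization formula `U_i U_j = ∑_{s ≤ min i j} U_{|i - j| + 2s}` turns the integrand of
`C_{ijkm}` into a double sum of products `U_{|i-j|+2s} U_{|k-m|+2t}`. The `U_n` are orthogonal
for the weight `√(1 - y²)`, each with squared norm `π/2` (substitute `y = cos θ`, so that
`U_n(cos θ) sin θ = sin((n+1)θ)`), so each product contributes `1` to `C_{ijkm}` exactly when
the two indices agree, and `0` otherwise.
-/

open Real Polynomial Polynomial.Chebyshev

namespace Polynomial.Chebyshev

variable (R : Type*) [CommRing R]

-- The polynomial form of
-- `sin((m+2)θ) sin((k+2)θ) - sin((m+1)θ) sin((k+1)θ) = sin((m+k+3)θ) sin θ`.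
theorem U_add_one_mul_U_add_one (m k : ℤ) :
    U R (m + 1) * U R (k + 1) = U R m * U R k + U R (m + k + 2) := by
  induction k using Polynomial.Chebyshev.induct with
  | zero =>
    rw [zero_add, U_zero, U_one, add_zero]
    linear_combination (norm := ring_nf) -U_add_two R m
  | one =>
    have h₁ := U_add_two R (m + 1)
    have h₂ := U_add_two R m
    rw [U_one, show (1 : ℤ) + 1 = 2 by norm_num, U_two]
    linear_combination (norm := ring_nf) -h₁ - 2 * (X : R[X]) * h₂
  | add_two k ih1 ih2 =>
    have h₁ := U_add_two R (k + 1)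
    have h₂ := U_add_two R k
    have h₃ := U_add_two R (m + k + 2)
    linear_combination (norm := ring_nf)
      2 * (X : R[X]) * ih1 - ih2 + U R (m + 1) * h₁ - U R m * h₂ - h₃
  | neg_add_one k ih1 ih2 =>
    have h₁ := U_add_two R (-k)
    have h₂ := U_add_two R (-k - 1)
    have h₃ := U_add_two R (m - k + 1)
    linear_combination (norm := ring_nf)
      2 * (X : R[X]) * ih1 - ih2 + U R (m + 1) * h₁ - U R m * h₂ - h₃

theorem U_mul_U_add (i : ℕ) (d : ℤ) :
    U R i * U R (i + d) = ∑ s ∈ Finset.range (i + 1), U R (d + 2 * s) := by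
  induction i with
  | zero => simp
  | succ i ih =>
    push_cast
    rw [add_right_comm, U_add_one_mul_U_add_one, ih, Finset.sum_range_succ _ (i + 1)]
    push_cast
    ring_nf

theorem U_mul_U_eq_sum (i j : ℕ) :
    U R i * U R j = ∑ s ∈ Finset.range (min i j + 1), U R (|(i : ℤ) - j| + 2 * s) := by
  rcases le_total i j with h | h
  · obtain ⟨d, rfl⟩ := Nat.exists_eq_add_of_le h
    rw [min_eq_left h]
    push_cast
    rw [U_mul_U_add]
    simp
  · obtain ⟨d, rfl⟩ := Nat.exists_eq_add_of_le h
    rw [min_eq_right h, mul_comm]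
    push_cast
    rw [U_mul_U_add]
    simp

end Polynomial.Chebyshev

theorem chebU_eq_eval_U (n : ℕ) (y : ℝ) : chebU n y = (U ℝ n).eval y := by
  induction n using Nat.twoStepInduction with
  | zero => simp [chebU]
  | one => simp [chebU]
  | more n ih₀ ih₁ =>
    rw [chebU, ih₀, ih₁]
    push_cast
    simp [U_add_two]

theorem integral_cos_int_mul_eq_zero {n : ℤ} (hn : n ≠ 0) :
    ∫ x in 0..π, cos (n * x) = 0 := by
  rw [intervalIntegral.integral_comp_mul_left _ (Int.cast_ne_zero.mpr hn), integral_cos]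
  simp [sin_int_mul_pi]

theorem integral_sin_int_mul_mul_sin_int_mul {a b : ℤ} (hab : a + b ≠ 0) :
    ∫ x in 0..π, sin (a * x) * sin (b * x) = if a = b then π / 2 else 0 := by
  have product_to_sum (x : ℝ) : sin (a * x) * sin (b * x)
      = (cos (((a - b : ℤ) : ℝ) * x) - cos (((a + b : ℤ) : ℝ) * x)) / 2 := by
    push_cast
    rw [sub_mul, add_mul, cos_sub, cos_add]
    ring
  simp_rw [product_to_sum]
  rw [intervalIntegral.integral_div, intervalIntegral.integral_sub
    ((by fun_prop : Continuous _).intervalIntegrable _ _)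
    ((by fun_prop : Continuous _).intervalIntegrable _ _),
    integral_cos_int_mul_eq_zero hab]
  split_ifs with h
  · simp [h]
  · rw [integral_cos_int_mul_eq_zero (sub_ne_zero.mpr h)]
    simp

theorem integral_mul_sqrt_one_sub_sq_eq_integral_cos (f : ℝ → ℝ) :
    ∫ x in -1..1, f x * √(1 - x ^ 2) = ∫ θ in 0..π, f (cos θ) * sin θ ^ 2 := calc
  ∫ x in -1..1, f x * √(1 - x ^ 2)
      = ∫ x in -1..1, f x * (1 - x ^ 2) * √(1 - x ^ 2)⁻¹ := by
    simp_rw [sqrt_inv, mul_assoc, ← div_eq_mul_inv, div_sqrt]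
  _ = ∫ x, f x * (1 - x ^ 2) ∂measureT := (integral_measureT _).symm
  _ = ∫ θ in 0..π, f (cos θ) * sin θ ^ 2 := by
    rw [integral_measureT_eq_integral_cos]
    simp_rw [sin_sq]

theorem Polynomial.Chebyshev.integral_eval_U_mul_eval_U_mul_sqrt {m n : ℤ} (h : m + n + 2 ≠ 0) :
    ∫ x in -1..1, (U ℝ m).eval x * (U ℝ n).eval x * √(1 - x ^ 2)
      = if m = n then π / 2 else 0 := by
  have via_sin (θ : ℝ) : (U ℝ m).eval (cos θ) * (U ℝ n).eval (cos θ) * sin θ ^ 2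
      = sin (((m + 1 : ℤ) : ℝ) * θ) * sin (((n + 1 : ℤ) : ℝ) * θ) := by
    push_cast
    rw [← U_real_cos, ← U_real_cos]
    ring
  rw [integral_mul_sqrt_one_sub_sq_eq_integral_cos]
  simp_rw [via_sin]
  rw [integral_sin_int_mul_mul_sin_int_mul (by omega)]
  simp

/-- Closed counting formula for the Fourier coefficients: `C_{ijkm}` equals the number of
pairs `(s, t)` with `s ≤ min i j`, `t ≤ min k m` and `|i − j| + 2s = |k − m| + 2t`. -/
theorem Ccoef_eq_card (i j k m : ℕ) :
    Ccoef i j k m =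
      (((Finset.range (min i j + 1) ×ˢ Finset.range (min k m + 1)).filter
        (fun p => |(i:ℤ) - (j:ℤ)| + 2 * (p.1:ℤ) = |(k:ℤ) - (m:ℤ)| + 2 * (p.2:ℤ))).card : ℝ) := by
  have expand (y : ℝ) : chebU i y * chebU j y * chebU k y * chebU m y * √(1 - y ^ 2)
      = ∑ p ∈ Finset.range (min i j + 1) ×ˢ Finset.range (min k m + 1),
          (U ℝ (|(i:ℤ) - j| + 2 * p.1)).eval y * (U ℝ (|(k:ℤ) - m| + 2 * p.2)).eval y
          * √(1 - y ^ 2) := by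
    have as_eval : chebU i y * chebU j y * chebU k y * chebU m y
        = (U ℝ i * U ℝ j * (U ℝ k * U ℝ m)).eval y := by
      simp only [chebU_eq_eval_U, eval_mul]; ring
    rw [as_eval, U_mul_U_eq_sum, U_mul_U_eq_sum, Finset.sum_mul_sum, ← Finset.sum_product',
      eval_finsetSum, Finset.sum_mul]
    simp only [eval_mul]
  rw [Ccoef]
  simp_rw [expand]
  rw [intervalIntegral.integral_finsetSum
      (fun p _ => (by fun_prop : Continuous _).intervalIntegrable _ _),
    Finset.sum_congr rfl (fun p _ => integral_eval_U_mul_eval_U_mul_sqrt (by positivity)),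
    Finset.mul_sum, Finset.natCast_card_filter]
  refine Finset.sum_congr rfl fun p _ => ?_
  split_ifs
  · field_simp
  · rw [mul_zero]
end
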